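/- Let W be a subspace in the big cell of the Sato Grassmannian. Then there is at most one pair (P,Q) ∈ Gr_𝒟 with P(W) ⊆ W and Q(W) ⊆ W: if (P,Q) and (P',Q') both belong to Gr_𝒟 and both stabilize W, then P = P' and Q = Q'. -/

import Mathlib

noncomputable section

/-- `H = ℂ((z⁻¹))`: formal Laurent series in `u = z⁻¹`. -/
abbrev H : Type := LaurentSeries ℂ

/-- The coefficient of `z^k` of a Laurent series in `z⁻¹`. -/
def zc (f : H) (k : ℤ) : ℂ := f.coeff (-k)

/-- `deg_z f ≤ d`: all coefficients of `z^k` with `k > d` vanish. -/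
def degLE (f : H) (d : ℤ) : Prop := ∀ k : ℤ, d < k → zc f k = 0

/-- The element `z` of `H`. -/
def zH : H := HahnSeries.single (-1 : ℤ) (1 : ℂ)

/-- Multiplication by `z` as a `ℂ`-linear endomorphism of `H`. -/
def Mz : H →ₗ[ℂ] H where
  toFun f := zH * f
  map_add' f g := mul_add zH f g
  map_smul' c f := by
    simp only [RingHom.id_apply, ← HahnSeries.single_zero_mul_eq_smul]
    ring

/-- The derivative `d/dz` as a `ℂ`-linear endomorphism of `H`. -/
def Dz : H →ₗ[ℂ] H where
  toFun f :=
    { coeff := fun n => ((1 - n : ℤ) : ℂ) * f.coeff (n - 1)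
      isPWO_support' := by
        refine Set.IsPWO.mono (Set.IsPWO.image_of_monotone f.isPWO_support'
          (f := fun m : ℤ => m + 1) (fun a b hab => by dsimp only; omega)) ?_
        intro n hn
        simp only [Function.mem_support] at hn
        refine ⟨n - 1, ?_, by ring⟩
        intro h
        exact hn (by rw [h, mul_zero]) }
  map_add' f g := by
    ext n
    simp [HahnSeries.coeff_add, mul_add]
  map_smul' c f := by
    ext n
    simp [HahnSeries.coeff_smul]
    ring

/-- `H₊ = ℂ[z]`: series with no negative powers of `z`. -/
def Hplus : Submodule ℂ H where
  carrier := {f | ∀ k : ℤ, k < 0 → zc f k = 0}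
  add_mem' := by
    intro f g hf hg k hk
    simp only [Set.mem_setOf_eq, zc, HahnSeries.coeff_add] at *
    rw [hf k hk, hg k hk, add_zero]
  zero_mem' := by intro k hk; simp [zc]
  smul_mem' := by
    intro c f hf k hk
    simp only [Set.mem_setOf_eq, zc, HahnSeries.coeff_smul] at *
    rw [hf k hk, smul_zero]

/-- `H₋ = z⁻¹ℂ[[z⁻¹]]`: series with only negative powers of `z`. -/
def Hminus : Submodule ℂ H where
  carrier := {f | ∀ k : ℤ, 0 ≤ k → zc f k = 0}
  add_mem' := by
    intro f g hf hg k hk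
    simp only [Set.mem_setOf_eq, zc, HahnSeries.coeff_add] at *
    rw [hf k hk, hg k hk, add_zero]
  zero_mem' := by intro k hk; simp [zc]
  smul_mem' := by
    intro c f hf k hk
    simp only [Set.mem_setOf_eq, zc, HahnSeries.coeff_smul] at *
    rw [hf k hk, smul_zero]

/-- The projection `π₊ : H → H₊` discarding all negative powers of `z`. -/
def piPlus : H →ₗ[ℂ] H where
  toFun f :=
    { coeff := fun n => if 0 < n then 0 else f.coeff n
      isPWO_support' := by
        refine Set.IsPWO.mono f.isPWO_support' ?_
        intro n hn
        simp only [Function.mem_support] at hn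
        by_cases h : 0 < n
        · exact absurd (if_pos h) hn
        · rw [if_neg h] at hn; exact hn }
  map_add' f g := by
    ext n
    by_cases h : 0 < n <;> simp [HahnSeries.coeff_add, h]
  map_smul' c f := by
    ext n
    by_cases h : 0 < n <;> simp [HahnSeries.coeff_smul, h]

/-- The statement that `A` is the operator `Σ_{k≥0} a_k (d/dz)^k`, where all
`deg a_k ≤ e`: partial sums converge to `A f` coefficientwise. -/
def IsOp (a : ℕ → H) (e : ℤ) (A : H →ₗ[ℂ] H) : Prop :=
  (∀ k, degLE (a k) e) ∧
  ∀ (f : H) (d : ℤ), degLE f d → ∀ N : ℕ,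
    degLE (A f - ∑ k ∈ Finset.range N, a k * ((Dz ^ k) f)) (d + e - N)

/-- The operator `A` stabilizes the subspace `W`. -/
def Stab (A : H →ₗ[ℂ] H) (W : Submodule ℂ H) : Prop := ∀ f ∈ W, A f ∈ W

/-- The big cell of the Sato Grassmannian: `π₊` restricts to a bijection of `W` onto `ℂ[z]`. -/
def BigCell (W : Submodule ℂ H) : Prop :=
  Set.BijOn piPlus (W : Set H) (Hplus : Set H)

/-- The pair `(P, Q)` belongs to `Gr_𝒟`. -/
def GrD (P Q : H →ₗ[ℂ] H) : Prop :=
  (∃ a : ℕ → H, IsOp a (-2) (P - Dz)) ∧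
  (∃ b : ℕ → H, IsOp b (-1) (Q - Mz)) ∧
  P ∘ₗ Q - Q ∘ₗ P = LinearMap.id

/-!
The difference `A = Σ a_k (d/dz)^k` of the two `P`'s (or of the two `Q`'s) has `deg a_k ≤ -1` and
stabilizes `W`; we show `A = 0`. Give the term `z^m (d/dz)^k` the weight `m - k`, and suppose all
terms of weight `> s` vanish (true for `s = -1`). Then `A` lowers degrees by at least `-s`, so for
`N < -s` it maps the element `w_N = z^N + O(z⁻¹)` of `W` to an element of `W` of negative degree,
hence to `0`. The `z^(N+s)` coefficient of `A w_N` is `Σ_k N(N-1)⋯(N-k+1) a_{k,s+k}`, and these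
equations for `N = 0, …, -s-1` form a triangular system with nonzero diagonal `N!`, so the terms
of weight `s` vanish too. By descending induction every coefficient vanishes, hence `A = 0`.
-/

lemma zc_add (f g : H) (k : ℤ) : zc (f + g) k = zc f k + zc g k :=
  HahnSeries.coeff_add

lemma zc_sub (f g : H) (k : ℤ) : zc (f - g) k = zc f k - zc g k :=
  HahnSeries.coeff_sub

lemma zc_sum {ι : Type*} (s : Finset ι) (g : ι → H) (k : ℤ) :
    zc (∑ i ∈ s, g i) k = ∑ i ∈ s, zc (g i) k :=
  HahnSeries.coeff_sum _

namespace degLE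

lemma mono {f : H} {d d' : ℤ} (hf : degLE f d) (hd : d ≤ d') : degLE f d' :=
  fun k hk => hf k (hd.trans_lt hk)

lemma add {f g : H} {d : ℤ} (hf : degLE f d) (hg : degLE g d) : degLE (f + g) d :=
  fun k hk => by rw [zc_add, hf k hk, hg k hk, add_zero]

lemma sub {f g : H} {d : ℤ} (hf : degLE f d) (hg : degLE g d) : degLE (f - g) d :=
  fun k hk => by rw [zc_sub, hf k hk, hg k hk, sub_zero]

lemma mul {f g : H} {d e : ℤ} (hf : degLE f d) (hg : degLE g e) : degLE (f * g) (d + e) := by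
  intro k hk
  rw [zc, HahnSeries.coeff_mul]
  refine Finset.sum_eq_zero fun ij hij => ?_
  obtain ⟨-, -, hsum⟩ := Finset.mem_antidiagonal.mp hij
  rcases lt_or_ge d (-ij.1) with hi | hi
  · simpa [zc] using congrArg (· * g.coeff ij.2) (hf _ hi)
  · simpa [zc] using congrArg (f.coeff ij.1 * ·) (hg (-ij.2) (by omega))

lemma eq_zero {f : H} (hf : ∀ d, degLE f d) : f = 0 := by
  ext n
  simpa [zc] using hf (-n - 1) (-n) (by omega)

end degLE

lemma exists_degLE (f : H) : ∃ d : ℤ, degLE f d :=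
  ⟨-f.order, fun k hk => HahnSeries.coeff_eq_zero_of_lt_order (by omega)⟩

lemma zc_Dz (f : H) (k : ℤ) : zc (Dz f) k = ((k + 1 : ℤ) : ℂ) * zc f (k + 1) := by
  simp only [zc, Dz, LinearMap.coe_mk, AddHom.coe_mk]
  congr 2 <;> ring

lemma degLE.Dz_pow {f : H} {d : ℤ} (hf : degLE f d) (k : ℕ) : degLE ((Dz ^ k) f) (d - k) := by
  induction k with
  | zero => simpa using hf
  | succ k ih =>
    intro r hr
    rw [pow_succ', Module.End.mul_apply, zc_Dz, ih (r + 1) (by push_cast at hr; omega), mul_zero]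

def zMonomial (d : ℤ) : H := HahnSeries.single (-d) 1

lemma zc_zMonomial (d k : ℤ) : zc (zMonomial d) k = if k = d then 1 else 0 := by
  simp only [zc, zMonomial, HahnSeries.coeff_single, neg_inj]

lemma degLE_zMonomial (d : ℤ) : degLE (zMonomial d) d :=
  fun k hk => by rw [zc_zMonomial, if_neg (by omega)]

lemma zMonomial_mem_Hplus (N : ℕ) : zMonomial N ∈ Hplus :=
  fun k hk => by rw [zc_zMonomial, if_neg (by omega)]

lemma Dz_single (d : ℤ) (c : ℂ) :
    Dz (HahnSeries.single (-d) c) = HahnSeries.single (-(d - 1)) ((d : ℂ) * c) := by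
  ext n
  simp only [Dz, LinearMap.coe_mk, AddHom.coe_mk, HahnSeries.coeff_single]
  by_cases h : n = -(d - 1)
  · subst h; simp
  · rw [if_neg h, if_neg (by omega), mul_zero]

lemma Dz_pow_zMonomial (N k : ℕ) :
    (Dz ^ k) (zMonomial N) = HahnSeries.single (-((N : ℤ) - k)) (N.descFactorial k : ℂ) := by
  induction k with
  | zero => simp [zMonomial]
  | succ k ih =>
    rw [pow_succ', Module.End.mul_apply, ih, Dz_single, ← descPochhammer_eval_eq_descFactorial,
      ← descPochhammer_eval_eq_descFactorial, descPochhammer_succ_eval]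
    push_cast
    rw [mul_comm]
    congr 2
    ring

lemma zc_mul_single (f : H) (s : ℤ) (c : ℂ) (r : ℤ) :
    zc (f * HahnSeries.single s c) r = zc f (r + s) * c := by
  simp only [zc, HahnSeries.coeff_mul_single]
  congr 2; ring

namespace IsOp

variable {a : ℕ → H} {e : ℤ} {A : H →ₗ[ℂ] H}

lemma zc_apply (hA : IsOp a e A) {f : H} {d : ℤ} (hf : degLE f d) {M : ℕ} {r : ℤ}
    (hM : d + e - M < r) : zc (A f) r = ∑ k ∈ Finset.range M, zc (a k * (Dz ^ k) f) r := by
  have h := hA.2 f d hf M r hM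
  rwa [zc_sub, zc_sum, sub_eq_zero] at h

lemma degLE_apply (hA : IsOp a e A) {s : ℤ} (ha : ∀ k, degLE (a k) (s + k)) {f : H} {d : ℤ}
    (hf : degLE f d) : degLE (A f) (d + s) := by
  intro r hr
  rw [hA.zc_apply hf (M := (d + e - r + 1).toNat) (by omega)]
  refine Finset.sum_eq_zero fun k _ => ((ha k).mul (hf.Dz_pow k)) r (by omega)

lemma zc_apply_zMonomial (hA : IsOp a e A) (N : ℕ) {s : ℤ} {M : ℕ} (hM : e - s < M) :
    zc (A (zMonomial N)) (N + s) =
      ∑ k ∈ Finset.range M, (N.descFactorial k : ℂ) * zc (a k) (s + k) := by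
  rw [hA.zc_apply (degLE_zMonomial N) (M := M) (by omega)]
  refine Finset.sum_congr rfl fun k _ => ?_
  rw [Dz_pow_zMonomial, zc_mul_single, mul_comm]
  congr 2; ring

lemma sub {a' : ℕ → H} {A' : H →ₗ[ℂ] H} (hA : IsOp a e A) (hA' : IsOp a' e A') :
    IsOp (a - a') e (A - A') := by
  refine ⟨fun k => (hA.1 k).sub (hA'.1 k), fun f d hf N => ?_⟩
  convert (hA.2 f d hf N).sub (hA'.2 f d hf N) using 1
  simp only [LinearMap.sub_apply, Pi.sub_apply, sub_mul, Finset.sum_sub_distrib]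
  abel

end IsOp

lemma Stab.sub {A A' : H →ₗ[ℂ] H} {W : Submodule ℂ H} (hA : Stab A W) (hA' : Stab A' W) :
    Stab (A - A') W :=
  fun f hf => W.sub_mem (hA f hf) (hA' f hf)

namespace BigCell

variable {W : Submodule ℂ H}

lemma exists_mem_degLE_sub_zMonomial (hW : BigCell W) (N : ℕ) :
    ∃ w ∈ W, degLE (w - zMonomial N) (-1) := by
  obtain ⟨w, hwW, hw⟩ := hW.surjOn (zMonomial_mem_Hplus N)
  refine ⟨w, hwW, fun k hk => ?_⟩
  have hc := congrArg (HahnSeries.coeff · (-k)) hw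
  simp only [piPlus, LinearMap.coe_mk, AddHom.coe_mk, if_neg (show ¬ (0 : ℤ) < -k by omega)] at hc
  rw [zc_sub, zc, zc, hc, sub_self]

lemma eq_zero_of_degLE (hW : BigCell W) {f : H} (hf : f ∈ W) (hdeg : degLE f (-1)) : f = 0 := by
  refine hW.injOn hf W.zero_mem ?_
  ext n
  by_cases hn : 0 < n
  · simp [piPlus, hn]
  · simpa [piPlus, hn, zc] using hdeg (-n) (by omega)

end BigCell

lemma eq_zero_of_sum_descFactorial_mul_eq_zero (c : ℕ → ℂ) (n : ℕ)
    (h : ∀ N < n, ∑ k ∈ Finset.range n, (N.descFactorial k : ℂ) * c k = 0) :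
    ∀ N < n, c N = 0 := by
  intro N
  induction N using Nat.strong_induction_on with
  | _ N ih =>
  intro hN
  have hsum := h N hN
  rw [Finset.sum_eq_single_of_mem N (Finset.mem_range.2 hN) fun k _ hkN => ?_,
    Nat.descFactorial_self] at hsum
  · exact (mul_eq_zero.mp hsum).resolve_left (by exact_mod_cast N.factorial_ne_zero)
  · rcases lt_or_gt_of_ne hkN with hlt | hgt
    · rw [ih k hlt (hlt.trans hN), mul_zero]
    · rw [Nat.descFactorial_eq_zero_iff_lt.mpr hgt, Nat.cast_zero, zero_mul]

section Stabilizer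

variable {W : Submodule ℂ H} {a : ℕ → H} {e : ℤ} {A : H →ₗ[ℂ] H}

lemma IsOp.degLE_coeff_of_stab (hW : BigCell W) (hA : IsOp a e A) (he : e ≤ -1)
    (hs : Stab A W) {s : ℤ} (ha : ∀ k, degLE (a k) (s + k)) :
    ∀ k, degLE (a k) (s - 1 + k) := by
  set n := (-s).toNat
  suffices hc : ∀ N < n, zc (a N) (s + N) = 0 by
    intro k r hr
    rcases lt_trichotomy r (s + k) with hlt | heq | hgt
    · omega
    · subst heq
      by_cases hk : k < n
      · exact hc k hk
      · exact hA.1 k _ (by omega)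
    · exact ha k r hgt
  refine eq_zero_of_sum_descFactorial_mul_eq_zero (fun k => zc (a k) (s + k)) n fun N hN => ?_
  obtain ⟨w, hwW, hw⟩ := hW.exists_mem_degLE_sub_zMonomial N
  have hwN : degLE w N := by
    simpa using (hw.mono (by omega)).add (degLE_zMonomial N)
  -- `A w ∈ W` has negative degree, so it vanishes, and with it the `z ^ (N + s)` coefficient.
  have hAw : A w = 0 :=
    hW.eq_zero_of_degLE (hs w hwW) ((hA.degLE_apply ha hwN).mono (by omega))
  calc ∑ k ∈ Finset.range n, (N.descFactorial k : ℂ) * zc (a k) (s + k)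
      = zc (A (zMonomial N)) (N + s) := (hA.zc_apply_zMonomial N (by omega)).symm
    _ = zc (A w) (N + s) - zc (A (w - zMonomial N)) (N + s) := by
      rw [← zc_sub, ← map_sub, sub_sub_cancel]
    _ = 0 := by rw [hAw, hA.degLE_apply ha hw _ (by omega)]; simp [zc]

lemma IsOp.eq_zero_of_stab (hW : BigCell W) (hA : IsOp a e A) (he : e ≤ -1) (hs : Stab A W) :
    A = 0 := by
  have hweight : ∀ n : ℕ, ∀ k, degLE (a k) (-1 - n + k) := by
    intro n
    induction n with
    | zero => exact fun k => (hA.1 k).mono (by omega)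
    | succ n ih =>
      intro k
      convert hA.degLE_coeff_of_stab hW he hs ih k using 2
      push_cast; ring
  refine LinearMap.ext fun f => ?_
  obtain ⟨d, hd⟩ := exists_degLE f
  exact degLE.eq_zero fun t => (hA.degLE_apply (hweight (d - t).toNat) hd).mono (by omega)

end Stabilizer

/-- A point of the big cell is stabilized by at most one pair in `Gr_𝒟`. -/
theorem canonical_pair_unique (W : Submodule ℂ H) (hW : BigCell W)
    (P Q P' Q' : H →ₗ[ℂ] H) (h : GrD P Q) (h' : GrD P' Q')
    (s1 : Stab P W) (s2 : Stab Q W) (s3 : Stab P' W) (s4 : Stab Q' W) :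
    P = P' ∧ Q = Q' := by
  obtain ⟨⟨a, ha⟩, ⟨b, hb⟩, -⟩ := h
  obtain ⟨⟨a', ha'⟩, ⟨b', hb'⟩, -⟩ := h'
  have hP : IsOp (a - a') (-2) (P - P') := by
    convert ha.sub ha' using 1; abel
  have hQ : IsOp (b - b') (-1) (Q - Q') := by
    convert hb.sub hb' using 1; abel
  exact ⟨sub_eq_zero.mp (hP.eq_zero_of_stab hW (by norm_num) (s1.sub s3)),
    sub_eq_zero.mp (hQ.eq_zero_of_stab hW le_rfl (s2.sub s4))⟩
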